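/- Every generating set G of the monoid IOF_n^par (n ≥ 4) contains the transformation u_{n−2} (domain {1,...,n−2}, ρ ↦ ρ+2) and the transformation x_{n−2} (domain {3,...,n}, ρ ↦ ρ−2). -/

import Mathlib

/-- A partial injection on `{1,...,n}`, represented by its graph. -/
structure PInj (n : ℕ) where
  R : ℕ → ℕ → Prop
  memL : ∀ ⦃x y⦄, R x y → x ∈ Set.Icc 1 n
  memR : ∀ ⦃x y⦄, R x y → y ∈ Set.Icc 1 n
  func : ∀ ⦃x y y'⦄, R x y → R x y' → y = y'
  inj : ∀ ⦃x x' y⦄, R x y → R x' y → x = x'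

namespace PInj

variable {n : ℕ}

@[ext] theorem ext {a b : PInj n} (h : ∀ x y, a.R x y ↔ b.R x y) : a = b := by
  cases a; cases b
  simp only [mk.injEq]
  funext x y
  exact propext (h x y)

instance : Mul (PInj n) :=
  ⟨fun a b =>
    { R := fun x z => ∃ y, a.R x y ∧ b.R y z
      memL := by rintro x z ⟨y, h1, _⟩; exact a.memL h1
      memR := by rintro x z ⟨y, _, h2⟩; exact b.memR h2
      func := by
        rintro x z z' ⟨y, h1, h2⟩ ⟨y', h1', h2'⟩
        obtain rfl := a.func h1 h1'
        exact b.func h2 h2'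
      inj := by
        rintro x x' z ⟨y, h1, h2⟩ ⟨y', h1', h2'⟩
        obtain rfl := b.inj h2 h2'
        exact a.inj h1 h1' }⟩

instance : One (PInj n) :=
  ⟨{ R := fun x y => x ∈ Set.Icc 1 n ∧ y = x
     memL := by rintro x y ⟨h, rfl⟩; exact h
     memR := by rintro x y ⟨h, rfl⟩; exact h
     func := by rintro x y y' ⟨_, rfl⟩ ⟨_, rfl⟩; rfl
     inj := by rintro x x' y ⟨_, rfl⟩ ⟨_, h⟩; exact h }⟩

instance : Monoid (PInj n) where
  mul_assoc a b c := by
    ext x y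
    constructor
    · rintro ⟨z, ⟨w, h1, h2⟩, h3⟩; exact ⟨w, h1, z, h2, h3⟩
    · rintro ⟨w, h1, z, h2, h3⟩; exact ⟨z, ⟨w, h1, h2⟩, h3⟩
  one_mul a := by
    ext x y
    constructor
    · rintro ⟨z, ⟨_, rfl⟩, h⟩; exact h
    · intro h; exact ⟨x, ⟨a.memL h, rfl⟩, h⟩
  mul_one a := by
    ext x y
    constructor
    · rintro ⟨z, h, _, rfl⟩; exact h
    · intro h; exact ⟨y, h, a.memR h, rfl⟩

/-- The inverse of a partial injection. -/
def inv (a : PInj n) : PInj n where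
  R := fun x y => a.R y x
  memL := by intro x y h; exact a.memR h
  memR := by intro x y h; exact a.memL h
  func := by intro x y y' h h'; exact a.inj h h'
  inj := by intro x x' y h h'; exact a.func h h'

/-- The domain of a partial injection. -/
def dom (a : PInj n) : Set ℕ := {x | ∃ y, a.R x y}

/-- The image of a partial injection. -/
def im (a : PInj n) : Set ℕ := {y | ∃ x, a.R x y}

end PInj

/-- The strict fence (zig-zag) order on `{1,...,n}`: `x ≺ y` iff `x` is odd and
`x`, `y` are adjacent.  It is generated by `i ≺ i+1` for odd `i` and `i+1 ≺ i`
for even `i`. -/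
def FenceLt (x y : ℕ) : Prop := Odd x ∧ (y = x + 1 ∨ x = y + 1)

/-- Membership in `IOF_n^par`: order-preserving, parity-preserving,
fence-preserving, and with fence-preserving inverse. -/
def IsIOF {n : ℕ} (a : PInj n) : Prop :=
  (∀ ⦃x y x' y'⦄, a.R x y → a.R x' y' → x < x' → y < y') ∧
  (∀ ⦃x y⦄, a.R x y → x % 2 = y % 2) ∧
  (∀ ⦃x y x' y'⦄, a.R x y → a.R x' y' → FenceLt x x' → FenceLt y y') ∧
  (∀ ⦃x y x' y'⦄, a.R x y → a.R x' y' → FenceLt y y' → FenceLt x x')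

/-- A partial identity: every point of the domain is fixed. -/
def IsPartialId {n : ℕ} (a : PInj n) : Prop := ∀ ⦃x y⦄, a.R x y → y = x

/-- The partial identity `v_i` with domain `{1,...,n} \ {i}`. -/
def vMap (n i : ℕ) : PInj n where
  R := fun x y => x ∈ Set.Icc 1 n ∧ x ≠ i ∧ y = x
  memL := by rintro x y ⟨h, _, rfl⟩; exact h
  memR := by rintro x y ⟨h, _, rfl⟩; exact h
  func := by rintro x y y' ⟨_, _, rfl⟩ ⟨_, _, rfl⟩; rfl
  inj := by rintro x x' y ⟨_, _, rfl⟩ ⟨_, _, h⟩; exact h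

/-- The map `u_i` with domain `{1,...,i} ∪ {i+4,...,n}`, sending `ρ ↦ ρ+2` for
`ρ ≤ i` and `ρ ↦ ρ` for `ρ ≥ i+4`. -/
def uMap (n i : ℕ) : PInj n where
  R := fun x y => x ∈ Set.Icc 1 n ∧ y ∈ Set.Icc 1 n ∧
        ((x ≤ i ∧ y = x + 2) ∨ (i + 4 ≤ x ∧ y = x))
  memL := by rintro x y ⟨h, _, _⟩; exact h
  memR := by rintro x y ⟨_, h, _⟩; exact h
  func := by
    rintro x y y' ⟨_, _, (⟨hx, rfl⟩ | ⟨hx, rfl⟩)⟩ ⟨_, _, (⟨hx', rfl⟩ | ⟨hx', rfl⟩)⟩ <;> omega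
  inj := by
    rintro x x' y ⟨_, _, (⟨hx, rfl⟩ | ⟨hx, rfl⟩)⟩ ⟨_, _, (⟨hx', h'⟩ | ⟨hx', h'⟩)⟩ <;> omega

/-- The set `J_i = {1,...,i} ∪ {i+4,...,n}`. -/
def Jset (n i : ℕ) : Set ℕ := {x | (1 ≤ x ∧ x ≤ i) ∨ (i + 4 ≤ x ∧ x ≤ n)}

/-- `G` is a generating set of the monoid `IOF_n^par`: it consists of elements of
`IOF_n^par` and every element of `IOF_n^par` is a finite product of elements of `G`. -/
def Generates (n : ℕ) (G : Set (PInj n)) : Prop :=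
  (∀ g ∈ G, IsIOF g) ∧
  ∀ a : PInj n, IsIOF a →
    ∃ l : List (PInj n), (∀ b ∈ l, b ∈ G) ∧ l.prod = a

/-!
A product of partial injections has rank at most that of each factor, so every factor of a
factorisation of `u_{n-2}` (of rank `n - 2`) into generators has rank at least `n - 2`, and is
therefore a partial identity, `u_{n-2}` or `x_{n-2}`. Partial identities and `x_{n-2}` never move
a point upwards while `u_{n-2}` sends `1` to `3`, so `u_{n-2}` itself must occur among the
factors; dually for `x_{n-2}`.
-/

open Set

theorem ncard_add_sub_le_of_disjoint_Ioo {n x x' : ℕ} {s : Set ℕ} (hs : s ⊆ Icc 1 n)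
    (hx' : x' ≤ n + 1) (h : Disjoint s (Ioo x x')) : s.ncard + (x' - x - 1) ≤ n := by
  have hIoo : Ioo x x' ⊆ Icc 1 n := fun w hw => ⟨by grind, by grind⟩
  calc s.ncard + (x' - x - 1) = (s ∪ Ioo x x').ncard := by
        rw [ncard_union_eq h ((finite_Icc 1 n).subset hs) (finite_Ioo x x'), ncard_Ioo_nat]
    _ ≤ (Icc 1 n).ncard := ncard_le_ncard (union_subset hs hIoo) (finite_Icc 1 n)
    _ = n := by simp

theorem FenceLt.succ_or (x : ℕ) : FenceLt x (x + 1) ∨ FenceLt (x + 1) x := by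
  rcases Nat.even_or_odd x with hx | hx
  · exact Or.inr ⟨hx.add_one, Or.inr rfl⟩
  · exact Or.inl ⟨hx, Or.inl rfl⟩

theorem fenceLt_add_two_iff {x y : ℕ} : FenceLt (x + 2) (y + 2) ↔ FenceLt x y := by
  simp only [FenceLt, Nat.odd_iff]
  omega

namespace PInj

variable {n : ℕ} {a b : PInj n}

theorem dom_subset (a : PInj n) : a.dom ⊆ Icc 1 n := fun _ ⟨_, h⟩ => a.memL h

theorem im_subset (a : PInj n) : a.im ⊆ Icc 1 n := fun _ ⟨_, h⟩ => a.memR h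

theorem dom_inv : a.inv.dom = a.im := rfl

theorem inv_mul (a b : PInj n) : (a * b).inv = b.inv * a.inv :=
  ext fun _ _ => ⟨fun ⟨z, h, h'⟩ => ⟨z, h', h⟩, fun ⟨z, h, h'⟩ => ⟨z, h', h⟩⟩

theorem ncard_dom_mul_le_left (a b : PInj n) : (a * b).dom.ncard ≤ a.dom.ncard :=
  ncard_le_ncard (fun _ ⟨_, y, h, _⟩ => ⟨y, h⟩) ((finite_Icc 1 n).subset a.dom_subset)

theorem ncard_dom_mul_le_right (a b : PInj n) : (a * b).dom.ncard ≤ b.dom.ncard := by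
  have hR {x} (hx : x ∈ (a * b).dom) : a.R x (Classical.epsilon (a.R x)) ∧
      Classical.epsilon (a.R x) ∈ b.dom := by
    obtain ⟨z, y, hxy, hyz⟩ := hx
    have hy := Classical.epsilon_spec ⟨y, hxy⟩
    exact ⟨hy, z, a.func hxy hy ▸ hyz⟩
  refine ncard_le_ncard_of_injOn (fun x => Classical.epsilon (a.R x)) (fun x hx => (hR hx).2)
    (fun x hx x' hx' heq => a.inj (hR hx).1 ?_) ((finite_Icc 1 n).subset b.dom_subset)
  simp only at heq
  exact heq ▸ (hR hx').1

theorem ncard_im_mul_le_left (a b : PInj n) : (a * b).im.ncard ≤ a.im.ncard := by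
  simpa only [← dom_inv, inv_mul] using ncard_dom_mul_le_right b.inv a.inv

theorem ncard_im_mul_le_right (a b : PInj n) : (a * b).im.ncard ≤ b.im.ncard :=
  ncard_le_ncard (fun _ ⟨_, _, _, h⟩ => ⟨_, h⟩) ((finite_Icc 1 n).subset b.im_subset)

theorem ncard_dom_prod_le {l : List (PInj n)} (hb : b ∈ l) : l.prod.dom.ncard ≤ b.dom.ncard := by
  obtain ⟨s, t, rfl⟩ := List.append_of_mem hb
  rw [List.prod_append, List.prod_cons]
  exact (ncard_dom_mul_le_right _ _).trans (ncard_dom_mul_le_left _ _)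

theorem ncard_im_prod_le {l : List (PInj n)} (hb : b ∈ l) : l.prod.im.ncard ≤ b.im.ncard := by
  obtain ⟨s, t, rfl⟩ := List.append_of_mem hb
  rw [List.prod_append, List.prod_cons, ← mul_assoc]
  exact (ncard_im_mul_le_left _ _).trans (ncard_im_mul_le_right _ _)

theorem prod_R_of_forall {r : ℕ → ℕ → Prop} [IsPreorder ℕ r] {l : List (PInj n)}
    (h : ∀ b ∈ l, ∀ x y, b.R x y → r x y) {x y : ℕ} (hxy : l.prod.R x y) : r x y := by
  induction l generalizing x with
  | nil => obtain ⟨-, rfl⟩ := hxy; exact refl _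
  | cons c l ih =>
    obtain ⟨z, hxz, hzy⟩ := hxy
    exact _root_.trans (h c List.mem_cons_self x z hxz)
      (ih (fun b hb => h b (List.mem_cons_of_mem c hb)) hzy)

theorem uMap_R {x y : ℕ} : (uMap n (n - 2)).R x y ↔ 1 ≤ x ∧ x + 2 ≤ n ∧ y = x + 2 := by
  simp only [uMap, mem_Icc]
  omega

theorem dom_uMap : (uMap n (n - 2)).dom = Icc 1 (n - 2) := by
  ext x
  simp only [dom, uMap_R, mem_Icc]
  exact ⟨fun ⟨_, h⟩ => by omega, fun h => ⟨x + 2, by omega⟩⟩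

theorem im_uMap : (uMap n (n - 2)).im = Icc 3 n := by
  ext y
  simp only [im, uMap_R, mem_Icc]
  exact ⟨fun ⟨x, hx⟩ => by omega, fun hy => ⟨y - 2, by omega⟩⟩

theorem eq_uMap_of_forall (hdom : n - 2 ≤ a.dom.ncard) (h : ∀ x y, a.R x y → y = x + 2) :
    a = uMap n (n - 2) := by
  have hsub : a.dom ⊆ Icc 1 (n - 2) := fun x ⟨y, hxy⟩ => by
    have := a.memL hxy
    have := a.memR hxy
    grind
  have hdom_eq : a.dom = Icc 1 (n - 2) :=
    eq_of_subset_of_ncard_le hsub (by simpa using hdom) (finite_Icc _ _)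
  ext x y
  rw [uMap_R]
  constructor
  · intro hxy
    have := a.memL hxy
    have := a.memR hxy
    grind
  · rintro ⟨hx, hxn, rfl⟩
    obtain ⟨y, hxy⟩ : x ∈ a.dom := hdom_eq ▸ ⟨hx, by omega⟩
    exact h x y hxy ▸ hxy

end PInj

open PInj

theorem isIOF_uMap (n : ℕ) : IsIOF (uMap n (n - 2)) := by
  have hfence {x y x' y' : ℕ} (h : (uMap n (n - 2)).R x y) (h' : (uMap n (n - 2)).R x' y') :
      FenceLt x x' ↔ FenceLt y y' := by
    rw [(uMap_R.1 h).2.2, (uMap_R.1 h').2.2, fenceLt_add_two_iff]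
  refine ⟨fun x y x' y' h h' _ => ?_, fun x y h => ?_, fun _ _ _ _ h h' => (hfence h h').1,
    fun _ _ _ _ h h' => (hfence h h').2⟩ <;> grind [uMap_R]

namespace IsIOF

variable {n : ℕ} {a : PInj n}

theorem lt_iff_lt (ha : IsIOF a) {x y x' y' : ℕ} (hxy : a.R x y) (hxy' : a.R x' y') :
    x < x' ↔ y < y' := by
  refine ⟨fun h => ha.1 hxy hxy' h, fun h => ?_⟩
  rcases lt_trichotomy x x' with hlt | rfl | hgt
  · exact hlt
  · exact absurd (a.func hxy hxy') h.ne
  · exact absurd (ha.1 hxy' hxy hgt) h.not_gt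

theorem inv (ha : IsIOF a) : IsIOF a.inv :=
  ⟨fun _ _ _ _ h h' hlt => (ha.lt_iff_lt h h').2 hlt, fun _ _ h => (ha.2.1 h).symm,
    fun _ _ _ _ h h' => ha.2.2.2 h h', fun _ _ _ _ h h' => ha.2.2.1 h h'⟩

theorem eq_succ_of_R_succ (ha : IsIOF a) {x y y' : ℕ} (hxy : a.R x y) (hxy' : a.R (x + 1) y') :
    y' = y + 1 := by
  have hlt : y < y' := ha.1 hxy hxy' (Nat.lt_succ_self x)
  rcases FenceLt.succ_or x with hf | hf
  · have := (ha.2.2.1 hxy hxy' hf).2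
    omega
  · have := (ha.2.2.1 hxy' hxy hf).2
    omega

section LargeRank

variable (ha : IsIOF a) (hdom : n - 2 ≤ a.dom.ncard) (him : n - 2 ≤ a.im.ncard)
include ha hdom him

/-- Between consecutive points of the domain the gap is at most 3 (the rank is at least `n - 2`),
likewise in the image, with equal parities; a gap of 1 on one side forces a gap of 1 on the
other by fence preservation. -/
theorem add_eq_add_of_consecutive {x y x' y' : ℕ} (hxy : a.R x y) (hxy' : a.R x' y')
    (hlt : x < x') (hgap : Disjoint a.dom (Ioo x x')) : y + x' = y' + x := by
  have hylt : y < y' := ha.1 hxy hxy' hlt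
  have hygap : Disjoint a.im (Ioo y y') := by
    refine Set.disjoint_left.mpr fun z ⟨w, hwz⟩ hz => Set.disjoint_left.mp hgap ⟨z, hwz⟩ ?_
    exact ⟨(ha.lt_iff_lt hxy hwz).2 hz.1, (ha.lt_iff_lt hwz hxy').2 hz.2⟩
  have hx := ncard_add_sub_le_of_disjoint_Ioo a.dom_subset (by linarith [(a.memL hxy').2]) hgap
  have hy := ncard_add_sub_le_of_disjoint_Ioo a.im_subset (by linarith [(a.memR hxy').2]) hygap
  have hpar := ha.2.1 hxy
  have hpar' := ha.2.1 hxy'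
  have hxy_succ : x' = x + 1 → y' = y + 1 := by
    rintro rfl; exact ha.eq_succ_of_R_succ hxy hxy'
  have hyx_succ : y' = y + 1 → x' = x + 1 := by
    rintro rfl; exact ha.inv.eq_succ_of_R_succ hxy hxy'
  omega

theorem add_eq_add_of_lt {x y x' y' : ℕ} (hxy : a.R x y) (hxy' : a.R x' y') (hlt : x < x') :
    y + x' = y' + x := by
  obtain ⟨k, hk⟩ : ∃ k, x' - x = k := ⟨_, rfl⟩
  induction k using Nat.strong_induction_on generalizing x y x' y' with
  | _ k ih =>
    by_cases hgap : Disjoint a.dom (Ioo x x')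
    · exact add_eq_add_of_consecutive ha hdom him hxy hxy' hlt hgap
    · obtain ⟨w, ⟨z, hwz⟩, hxw, hwx'⟩ := Set.not_disjoint_iff.mp hgap
      have h1 := ih (w - x) (by omega) hxy hwz hxw rfl
      have h2 := ih (x' - w) (by omega) hwz hxy' hwx' rfl
      omega

theorem add_eq_add {x y x' y' : ℕ} (hxy : a.R x y) (hxy' : a.R x' y') : y + x' = y' + x := by
  rcases lt_trichotomy x x' with hlt | rfl | hgt
  · exact add_eq_add_of_lt ha hdom him hxy hxy' hlt
  · rw [a.func hxy hxy']
  · exact (add_eq_add_of_lt ha hdom him hxy' hxy hgt).symm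

/-- The shift `y - x` is constant; a domain point `≤ 3` and one `≥ n - 2` bound it by 2, and
parity excludes `±1`. -/
theorem classify (hn : 3 ≤ n) :
    IsPartialId a ∨ a = uMap n (n - 2) ∨ a = (uMap n (n - 2)).inv := by
  have hlow : ¬ Disjoint a.dom (Ioo 0 4) := fun h => by
    have := ncard_add_sub_le_of_disjoint_Ioo a.dom_subset (by omega) h; omega
  have hhigh : ¬ Disjoint a.dom (Ioo (n - 3) (n + 1)) := fun h => by
    have := ncard_add_sub_le_of_disjoint_Ioo a.dom_subset le_rfl h; omega
  obtain ⟨p, ⟨yp, hp⟩, hp4⟩ := Set.not_disjoint_iff.mp hlow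
  obtain ⟨q, ⟨yq, hq⟩, hq3⟩ := Set.not_disjoint_iff.mp hhigh
  have hshift x y (hxy : a.R x y) : y + p = yp + x := ha.add_eq_add hdom him hxy hp
  have := ha.add_eq_add hdom him hp hq
  have := ha.2.1 hp
  have := a.memR hp
  have := a.memR hq
  simp only [mem_Icc, mem_Ioo] at *
  rcases (by omega : yp = p ∨ yp = p + 2 ∨ p = yp + 2) with h | h | h
  · exact Or.inl fun x y hxy => by have := hshift x y hxy; omega
  · exact Or.inr <| Or.inl <| eq_uMap_of_forall hdom fun x y hxy => by
      have := hshift x y hxy; omega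
  · refine Or.inr <| Or.inr ?_
    rw [← eq_uMap_of_forall (a := a.inv) him fun x y hxy => by have := hshift y x hxy; omega]
    rfl

end LargeRank

end IsIOF

theorem Generates.exists_factorization {n : ℕ} {G : Set (PInj n)} (hG : Generates n G)
    (hn : 3 ≤ n) {a : PInj n} (ha : IsIOF a) (hdom : n - 2 ≤ a.dom.ncard)
    (him : n - 2 ≤ a.im.ncard) :
    ∃ l : List (PInj n), l.prod = a ∧ ∀ b ∈ l,
      b ∈ G ∧ (IsPartialId b ∨ b = uMap n (n - 2) ∨ b = (uMap n (n - 2)).inv) := by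
  obtain ⟨l, hlG, rfl⟩ := hG.2 a ha
  exact ⟨l, rfl, fun b hb => ⟨hlG b hb, (hG.1 b (hlG b hb)).classify
    (hdom.trans (ncard_dom_prod_le hb)) (him.trans (ncard_im_prod_le hb)) hn⟩⟩

/-- every generating set of `IOF_n^par` contains `u_{n-2}` and `x_{n-2}`. -/
theorem stmt11 (n : ℕ) (hn : 4 ≤ n) (G : Set (PInj n)) (hG : Generates n G) :
    uMap n (n - 2) ∈ G ∧ (uMap n (n - 2)).inv ∈ G := by
  set u := uMap n (n - 2)
  have hu : IsIOF u := isIOF_uMap n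
  have hudom : n - 2 ≤ u.dom.ncard := by simp [u, dom_uMap]
  have huim : n - 2 ≤ u.im.ncard := by simp [u, im_uMap]
  have h13 : u.R 1 3 := uMap_R.2 ⟨le_rfl, by omega, rfl⟩
  constructor
  · obtain ⟨l, hl, hlG⟩ := hG.exists_factorization (by omega) hu hudom huim
    by_contra hnot
    have : 3 ≤ 1 := prod_R_of_forall (r := (· ≥ ·)) (fun b hb x y hxy => ?_) (hl ▸ h13)
    · omega
    obtain ⟨hbG, h | rfl | rfl⟩ := hlG b hb
    · exact (h hxy).le
    · exact absurd hbG hnot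
    · exact (uMap_R.1 hxy).2.2 ▸ Nat.le_add_right _ _
  · obtain ⟨l, hl, hlG⟩ := hG.exists_factorization (by omega) hu.inv huim hudom
    by_contra hnot
    have : 3 ≤ 1 := prod_R_of_forall (r := (· ≤ ·)) (fun b hb x y hxy => ?_)
      (hl ▸ show u.inv.R 3 1 from h13)
    · omega
    obtain ⟨hbG, h | rfl | rfl⟩ := hlG b hb
    · exact (h hxy).ge
    · exact (uMap_R.1 hxy).2.2 ▸ Nat.le_add_right _ _
    · exact absurd hbG hnot
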